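/- arXiv:2406.00740 — 2 statements merged into one kernel-verified Lean document; each statement's English description precedes it below -/
import Mathlib

section
/- Every chamber of F_q^c is opposite to exactly q^{binomial(c,2)} chambers of F_q^c. -/
open Module Finset
open scoped Classical
set_option linter.unusedSectionVars false

/-- A chamber of a `c`-dimensional vector space, encoded as an increasing chain
`f : ℕ → Submodule K V` with `finrank (f i) = i` for `i ≤ c` and `f i = ⊤` for `i ≥ c`. -/
def IsChamber (K : Type*) {V : Type*} [Field K] [AddCommGroup V] [Module K V]
    (c : ℕ) (f : ℕ → Submodule K V) : Prop :=
  Monotone f ∧ (∀ i ≤ c, Module.finrank K (f i) = i) ∧ ∀ i, c ≤ i → f i = ⊤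

/-- The type of chambers of `V`, `dim V = c`. -/
abbrev Chamber (K V : Type*) [Field K] [AddCommGroup V] [Module K V] (c : ℕ) :=
  {f : ℕ → Submodule K V // IsChamber K c f}

/-- Two chambers are opposite if `C_i ∩ D_{c-i} = 0` for `1 ≤ i ≤ c - 1`. -/
def OppositeChambers (K : Type*) {V : Type*} [Field K] [AddCommGroup V] [Module K V]
    (c : ℕ) (f g : ℕ → Submodule K V) : Prop :=
  ∀ i, 1 ≤ i → i ≤ c - 1 → f i ⊓ g (c - i) = ⊥

/-- `z_c(q) = ∏_{i=1}^c (q^i - 1) / (q-1)`, the number of chambers of `𝔽_q^c`. -/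
def zNat (q c : ℕ) : ℕ := (∏ i ∈ Finset.Icc 1 c, (q ^ i - 1)) / (q - 1) ^ c

/-- The Gaussian binomial coefficient `[b choose a]_q`. -/
def gaussNat (q b a : ℕ) : ℕ :=
  (∏ i ∈ Finset.Icc 1 a, (q ^ (b - a + i) - 1)) / ∏ i ∈ Finset.Icc 1 a, (q ^ i - 1)

section OppCount

variable {K V : Type*} [Field K] [AddCommGroup V] [Module K V]

/-- Lines complementing `f i` inside `f (i+1)`. -/
def ChamberLine (K : Type*) {V : Type*} [Field K] [AddCommGroup V] [Module K V]
    (f : ℕ → Submodule K V) (i : ℕ) : Type _ :=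
  {L : Submodule K V // L ⊔ f i = f (i + 1) ∧ L ⊓ f i = ⊥}

/-- The chain built from the lines `ℓ (c-1), ℓ (c-2), ...`. -/
def chainP (c : ℕ) (ℓ : ℕ → Submodule K V) : ℕ → Submodule K V
  | 0 => ⊥
  | j + 1 => chainP c ℓ j ⊔ ℓ (c - 1 - j)

variable [FiniteDimensional K V] {c : ℕ} {f : ℕ → Submodule K V}

lemma IsChamber.f_zero (hf : IsChamber K c f) : f 0 = ⊥ := by
  have h := hf.2.1 0 (Nat.zero_le _)
  exact Submodule.finrank_eq_zero.mp h

lemma lineRank (hf : IsChamber K c f) {i : ℕ} (hi : i < c) {L : Submodule K V}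
    (h1 : L ⊔ f i = f (i + 1)) (h2 : L ⊓ f i = ⊥) : finrank K L = 1 := by
  have h := Submodule.finrank_sup_add_finrank_inf_eq L (f i)
  rw [h1, h2] at h
  have e1 : finrank K (f i) = i := hf.2.1 i hi.le
  have e2 : finrank K (f (i + 1)) = i + 1 := hf.2.1 (i + 1) hi
  have e3 : finrank K (⊥ : Submodule K V) = 0 := finrank_bot K V
  omega

lemma chainP_monotone (c : ℕ) (ℓ : ℕ → Submodule K V) : Monotone (chainP c ℓ) :=
  monotone_nat_of_le_succ fun _ => le_sup_left

lemma chainP_main (hf : IsChamber K c f) (hV : finrank K V = c)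
    (ℓ : ℕ → Submodule K V)
    (hℓ : ∀ i < c, ℓ i ⊔ f i = f (i + 1) ∧ ℓ i ⊓ f i = ⊥) :
    ∀ j ≤ c, f (c - j) ⊔ chainP c ℓ j = ⊤ ∧ finrank K (chainP c ℓ j) = j := by
  intro j
  induction j with
  | zero =>
    intro _
    constructor
    · show f (c - 0) ⊔ (⊥ : Submodule K V) = ⊤
      rw [sup_bot_eq, Nat.sub_zero]
      exact hf.2.2 c le_rfl
    · show finrank K (⊥ : Submodule K V) = 0
      exact finrank_bot K V
  | succ j ih =>
    intro hjc
    obtain ⟨hsup, hrank⟩ := ih (by omega)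
    have hcj : c - 1 - j < c := by omega
    have e : c - 1 - j = c - (j + 1) := by omega
    have h1 : f (c - (j + 1)) ⊔ ℓ (c - 1 - j) = f (c - j) := by
      have := (hℓ (c - 1 - j) hcj).1
      rw [e] at this
      rw [e, sup_comm, this]
      congr 1
      omega
    have hstep : f (c - (j + 1)) ⊔ chainP c ℓ (j + 1) = ⊤ := by
      show f (c - (j + 1)) ⊔ (chainP c ℓ j ⊔ ℓ (c - 1 - j)) = ⊤
      rw [sup_comm (chainP c ℓ j) (ℓ (c - 1 - j)), ← sup_assoc, h1, hsup]
    refine ⟨hstep, ?_⟩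
    have hLrank : finrank K (ℓ (c - 1 - j)) = 1 :=
      lineRank hf hcj (hℓ _ hcj).1 (hℓ _ hcj).2
    have hform := Submodule.finrank_sup_add_finrank_inf_eq (chainP c ℓ j) (ℓ (c - 1 - j))
    have hle : finrank K (chainP c ℓ (j + 1)) ≤ j + 1 := by
      show finrank K ↥(chainP c ℓ j ⊔ ℓ (c - 1 - j)) ≤ j + 1
      omega
    have hform2 := Submodule.finrank_sup_add_finrank_inf_eq (f (c - (j + 1))) (chainP c ℓ (j + 1))
    rw [hstep] at hform2
    have ht : finrank K (⊤ : Submodule K V) = c := by rw [finrank_top]; exact hV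
    have hfc : finrank K (f (c - (j + 1))) = c - (j + 1) := hf.2.1 _ (by omega)
    omega

lemma chainP_inf (hf : IsChamber K c f) (hV : finrank K V = c)
    (ℓ : ℕ → Submodule K V)
    (hℓ : ∀ i < c, ℓ i ⊔ f i = f (i + 1) ∧ ℓ i ⊓ f i = ⊥)
    {j : ℕ} (hj : j ≤ c) : f (c - j) ⊓ chainP c ℓ j = ⊥ := by
  obtain ⟨hsup, hrank⟩ := chainP_main hf hV ℓ hℓ j hj
  have hform := Submodule.finrank_sup_add_finrank_inf_eq (f (c - j)) (chainP c ℓ j)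
  rw [hsup] at hform
  have ht : finrank K (⊤ : Submodule K V) = c := by rw [finrank_top]; exact hV
  have hfc : finrank K (f (c - j)) = c - j := hf.2.1 _ (by omega)
  have : finrank K ↥(f (c - j) ⊓ chainP c ℓ j) = 0 := by omega
  exact Submodule.finrank_eq_zero.mp this

lemma chainP_isChamber (hf : IsChamber K c f) (hV : finrank K V = c)
    (ℓ : ℕ → Submodule K V)
    (hℓ : ∀ i < c, ℓ i ⊔ f i = f (i + 1) ∧ ℓ i ⊓ f i = ⊥) :
    IsChamber K c (chainP c ℓ) := by
  refine ⟨chainP_monotone c ℓ, fun i hi => (chainP_main hf hV ℓ hℓ i hi).2, fun i hi => ?_⟩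
  have htop : chainP c ℓ c = ⊤ := by
    apply Submodule.eq_top_of_finrank_eq
    rw [(chainP_main hf hV ℓ hℓ c le_rfl).2, hV]
  exact eq_top_iff.mpr (htop ▸ chainP_monotone c ℓ hi)

lemma chainP_opposite (hf : IsChamber K c f) (hV : finrank K V = c)
    (ℓ : ℕ → Submodule K V)
    (hℓ : ∀ i < c, ℓ i ⊔ f i = f (i + 1) ∧ ℓ i ⊓ f i = ⊥) :
    OppositeChambers K c f (chainP c ℓ) := by
  intro i h1 h2
  have e : c - (c - i) = i := by omega
  have := chainP_inf hf hV ℓ hℓ (j := c - i) (by omega)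
  rwa [e] at this

/-- The forward construction: lines from an opposite chamber. -/
lemma forward_line (hf : IsChamber K c f) (hV : finrank K V = c)
    {g : ℕ → Submodule K V} (hg : IsChamber K c g) (hop : OppositeChambers K c f g)
    {i : ℕ} (hi : i < c) :
    (g (c - i) ⊓ f (i + 1)) ⊔ f i = f (i + 1) ∧ (g (c - i) ⊓ f (i + 1)) ⊓ f i = ⊥ := by
  have hfi : finrank K (f i) = i := hf.2.1 i hi.le
  have hfi1 : finrank K (f (i + 1)) = i + 1 := hf.2.1 (i + 1) hi
  have hgi : finrank K (g (c - i)) = c - i := hg.2.1 (c - i) (by omega)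
  have ht : finrank K (⊤ : Submodule K V) = c := by rw [finrank_top]; exact hV
  have hb : finrank K (⊥ : Submodule K V) = 0 := finrank_bot K V
  have hginf : g (c - i) ⊓ f i = ⊥ := by
    rcases Nat.eq_zero_or_pos i with h0 | h0
    · rw [h0, hf.f_zero, inf_bot_eq]
    · rw [inf_comm]; exact hop i h0 (by omega)
  have hgsup : g (c - i) ⊔ f i = ⊤ := by
    rcases Nat.eq_zero_or_pos i with h0 | h0
    · rw [h0, hf.f_zero, sup_bot_eq, Nat.sub_zero]; exact hg.2.2 c le_rfl
    · apply Submodule.eq_top_of_finrank_eq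
      have hform := Submodule.finrank_sup_add_finrank_inf_eq (g (c - i)) (f i)
      rw [hginf] at hform
      omega
  have hgsup1 : g (c - i) ⊔ f (i + 1) = ⊤ := by
    rw [eq_top_iff, ← hgsup]
    exact sup_le_sup_left (hf.1 (Nat.le_succ i)) _
  have hLrank : finrank K ↥(g (c - i) ⊓ f (i + 1)) = 1 := by
    have hform := Submodule.finrank_sup_add_finrank_inf_eq (g (c - i)) (f (i + 1))
    rw [hgsup1] at hform
    omega
  have hinf : (g (c - i) ⊓ f (i + 1)) ⊓ f i = ⊥ := by
    rw [inf_assoc, inf_eq_right.mpr (hf.1 (Nat.le_succ i))]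
    exact hginf
  refine ⟨?_, hinf⟩
  have hle' : (g (c - i) ⊓ f (i + 1)) ⊔ f i ≤ f (i + 1) :=
    sup_le inf_le_right (hf.1 (Nat.le_succ i))
  have hrge : finrank K (f (i + 1)) ≤ finrank K ↥((g (c - i) ⊓ f (i + 1)) ⊔ f i) := by
    have hform := Submodule.finrank_sup_add_finrank_inf_eq (g (c - i) ⊓ f (i + 1)) (f i)
    rw [hinf] at hform
    omega
  exact le_antisymm hle' (le_of_eq (Submodule.eq_of_le_of_finrank_le hle' hrge).symm)

/-- Extend a family of lines indexed by `Fin c` to `ℕ`. -/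
noncomputable def extLines (c : ℕ) (f : ℕ → Submodule K V)
    (ℓ : ∀ i : Fin c, ChamberLine K f i) : ℕ → Submodule K V :=
  fun i => if h : i < c then (ℓ ⟨i, h⟩).1 else ⊥

lemma extLines_spec (ℓ : ∀ i : Fin c, ChamberLine K f i) :
    ∀ i < c, extLines c f ℓ i ⊔ f i = f (i + 1) ∧ extLines c f ℓ i ⊓ f i = ⊥ := by
  intro i hi
  simp only [extLines, dif_pos hi]
  exact (ℓ ⟨i, hi⟩).2

lemma chainP_le {g : ℕ → Submodule K V} (hg : IsChamber K c g)
    {ℓ : ℕ → Submodule K V} (h : ∀ i < c, ℓ i ≤ g (c - i)) (j : ℕ) :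
    chainP c ℓ j ≤ g j := by
  induction j with
  | zero => exact bot_le
  | succ j ih =>
    show chainP c ℓ j ⊔ ℓ (c - 1 - j) ≤ g (j + 1)
    rcases lt_or_ge j c with hj | hj
    · apply sup_le (ih.trans (hg.1 (Nat.le_succ j)))
      have h' : c - 1 - j < c := by omega
      have e : c - (c - 1 - j) = j + 1 := by omega
      exact (h _ h').trans (le_of_eq (by rw [e]))
    · rw [hg.2.2 (j + 1) (by omega)]; exact le_top

/-- Two chambers, one pointwise below the other, are equal. -/
lemma chamber_le_eq {g g' : ℕ → Submodule K V} (hg : IsChamber K c g)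
    (hg' : IsChamber K c g') (hle : ∀ j, g' j ≤ g j) : g' = g := by
  funext j
  rcases le_or_gt j c with hj | hj
  · exact Submodule.eq_of_le_of_finrank_le (hle j)
      (by rw [hg.2.1 j hj, hg'.2.1 j hj])
  · rw [hg.2.2 j hj.le, hg'.2.2 j hj.le]

/-- The bijection between chambers opposite to `f` and families of complementary lines. -/
noncomputable def oppEquiv (hf : IsChamber K c f) (hV : finrank K V = c) :
    {g : ℕ → Submodule K V // IsChamber K c g ∧ OppositeChambers K c f g} ≃
      ∀ i : Fin c, ChamberLine K f i where
  toFun g := fun i =>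
    ⟨g.1 (c - i) ⊓ f (i + 1),
      (forward_line hf hV g.2.1 g.2.2 i.2).1, (forward_line hf hV g.2.1 g.2.2 i.2).2⟩
  invFun ℓ :=
    ⟨chainP c (extLines c f ℓ),
      chainP_isChamber hf hV _ (extLines_spec ℓ),
      chainP_opposite hf hV _ (extLines_spec ℓ)⟩
  left_inv := by
    rintro ⟨g, hg, hop⟩
    apply Subtype.ext
    apply chamber_le_eq hg (chainP_isChamber hf hV _ (extLines_spec _))
    apply chainP_le hg
    intro i hi
    simp only [extLines, dif_pos hi]
    exact inf_le_left
  right_inv := by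
    intro ℓ
    funext i
    apply Subtype.ext
    show chainP c (extLines c f ℓ) (c - i) ⊓ f (i + 1) = (ℓ i).1
    have hi : (i : ℕ) < c := i.2
    have hspec := extLines_spec ℓ
    have hLi : extLines c f ℓ i = (ℓ i).1 := by
      rw [extLines, dif_pos hi]
    have hrank : finrank K ((ℓ i).1) = 1 := lineRank hf hi (ℓ i).2.1 (ℓ i).2.2
    have le1 : (ℓ i).1 ≤ chainP c (extLines c f ℓ) (c - i) := by
      have e1 : c - (i : ℕ) = (c - 1 - i) + 1 := by omega
      have e2 : c - 1 - (c - 1 - i) = i := by omega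
      rw [e1]
      show (ℓ i).1 ≤ chainP c (extLines c f ℓ) (c - 1 - i) ⊔ extLines c f ℓ (c - 1 - (c - 1 - i))
      rw [e2, hLi]
      exact le_sup_right
    have le2 : (ℓ i).1 ≤ f ((i : ℕ) + 1) :=
      le_sup_left.trans (le_of_eq (ℓ i).2.1)
    have hinfi : chainP c (extLines c f ℓ) (c - i) ⊓ f i = ⊥ := by
      have e : c - (c - (i : ℕ)) = i := by omega
      have := chainP_inf hf hV _ hspec (j := c - i) (by omega)
      rw [e] at this
      rw [inf_comm]; exact this
    have hQinf : (chainP c (extLines c f ℓ) (c - i) ⊓ f ((i : ℕ) + 1)) ⊓ f i = ⊥ := by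
      rw [eq_bot_iff, ← hinfi]
      exact inf_le_inf_right _ inf_le_left
    have hQsup : (chainP c (extLines c f ℓ) (c - i) ⊓ f ((i : ℕ) + 1)) ⊔ f i ≤ f ((i : ℕ) + 1) :=
      sup_le inf_le_right (hf.1 (Nat.le_succ i))
    have hform := Submodule.finrank_sup_add_finrank_inf_eq
      (chainP c (extLines c f ℓ) (c - i) ⊓ f ((i : ℕ) + 1)) (f i)
    rw [hQinf] at hform
    have h1 : finrank K ↥((chainP c (extLines c f ℓ) (c - i) ⊓ f ((i : ℕ) + 1)) ⊔ f i)
        ≤ (i : ℕ) + 1 :=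
      (Submodule.finrank_mono hQsup).trans_eq (hf.2.1 _ hi)
    have h2 : finrank K (f (i : ℕ)) = i := hf.2.1 i hi.le
    have h3 : finrank K (⊥ : Submodule K V) = 0 := finrank_bot K V
    refine (Submodule.eq_of_le_of_finrank_le (le_inf le1 le2) ?_).symm
    rw [hrank]
    omega

/-- Counting the lines complementing `f i` in `f (i+1)`. -/
lemma card_chamberLine [Fintype K] (hf : IsChamber K c f) {i : ℕ} (hi : i < c) :
    Nat.card (ChamberLine K f i) = Fintype.card K ^ i := by
  have hfi : finrank K (f i) = i := hf.2.1 i hi.le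
  have hfi1 : finrank K (f (i + 1)) = i + 1 := hf.2.1 (i + 1) hi
  have hmon : f i ≤ f (i + 1) := hf.1 (Nat.le_succ i)
  have hlt : f i < f (i + 1) := by
    refine lt_of_le_of_ne hmon ?_
    intro h
    rw [h, hfi1] at hfi
    omega
  obtain ⟨e, he1, he2⟩ := SetLike.exists_of_lt hlt
  have hew : ∀ w : V, w ∈ f i → e + w ≠ 0 := by
    intro w hw h
    apply he2
    have : e = -w := by linear_combination (norm := module) h
    rw [this]; exact neg_mem hw
  have hinfbot : ∀ w : ↥(f i), Submodule.span K {e + w.1} ⊓ f i = ⊥ := by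
    intro w
    rw [eq_bot_iff]
    intro x hx
    obtain ⟨hx1, hx2⟩ := Submodule.mem_inf.mp hx
    obtain ⟨a, ha⟩ := Submodule.mem_span_singleton.mp hx1
    rcases eq_or_ne a 0 with h0 | h0
    · simp [← ha, h0]
    · exfalso
      apply he2
      have : e = a⁻¹ • x - w.1 := by
        rw [← ha, smul_smul, inv_mul_cancel₀ h0, one_smul]
        abel
      rw [this]
      exact Submodule.sub_mem _ (Submodule.smul_mem _ _ hx2) w.2
  have hspan1 : ∀ w : ↥(f i), finrank K (Submodule.span K {e + w.1}) = 1 :=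
    fun w => finrank_span_singleton (hew w.1 w.2)
  have hsupeq : ∀ w : ↥(f i), Submodule.span K {e + w.1} ⊔ f i = f (i + 1) := by
    intro w
    have hsle : Submodule.span K {e + w.1} ⊔ f i ≤ f (i + 1) := by
      apply sup_le
      · rw [Submodule.span_le, Set.singleton_subset_iff]
        exact add_mem he1 (hmon w.2)
      · exact hmon
    have hform := Submodule.finrank_sup_add_finrank_inf_eq (Submodule.span K {e + w.1}) (f i)
    rw [hinfbot w] at hform
    have h3 : finrank K (⊥ : Submodule K V) = 0 := finrank_bot K V
    have hs := hspan1 w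
    have hrge : finrank K (f (i + 1)) ≤ finrank K ↥(Submodule.span K {e + w.1} ⊔ f i) := by
      rw [hfi1]; omega
    exact le_antisymm hsle (le_of_eq (Submodule.eq_of_le_of_finrank_le hsle hrge).symm)
  let φ : ↥(f i) → ChamberLine K f i := fun w =>
    ⟨Submodule.span K {e + w.1}, hsupeq w, hinfbot w⟩
  have hbij : Function.Bijective φ := by
    constructor
    · rintro ⟨w, hw⟩ ⟨w', hw'⟩ h
      have h' : Submodule.span K {e + w} = Submodule.span K {e + w'} :=
        congrArg Subtype.val h
      have hmem : e + w ∈ Submodule.span K {e + w'} := by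
        rw [← h']; exact Submodule.mem_span_singleton_self _
      obtain ⟨a, ha⟩ := Submodule.mem_span_singleton.mp hmem
      have ha1 : a = 1 := by
        by_contra hne
        apply he2
        have ha' : a • e + a • w' = e + w := by
          rw [← smul_add]; exact ha
        have hsub : (1 - a) • e = a • w' - w := by
          rw [sub_smul, one_smul]
          linear_combination (norm := module) -ha'
        have h1a : (1 : K) - a ≠ 0 := sub_ne_zero.mpr (Ne.symm hne)
        have he' : e = (1 - a)⁻¹ • (a • w' - w) := by
          rw [← hsub, smul_smul, inv_mul_cancel₀ h1a, one_smul]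
        rw [he']
        exact Submodule.smul_mem _ _ (sub_mem (Submodule.smul_mem _ _ hw') hw)
      rw [ha1, one_smul] at ha
      exact Subtype.ext (add_left_cancel ha).symm
    · rintro ⟨L, hL1, hL2⟩
      have hLrank : finrank K L = 1 := lineRank hf hi hL1 hL2
      have heL : e ∈ L ⊔ f i := hL1.symm ▸ he1
      obtain ⟨x, hx, y, hy, hxy⟩ := Submodule.mem_sup.mp heL
      refine ⟨⟨-y, neg_mem hy⟩, ?_⟩
      apply Subtype.ext
      show Submodule.span K {e + -y} = L
      have hx' : e + -y = x := by linear_combination (norm := module) -hxy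
      have hne0 : e + -y ≠ 0 := by
        intro h0
        apply he2
        have : e = y := by linear_combination (norm := module) h0
        rw [this]; exact hy
      apply Submodule.eq_of_le_of_finrank_le
      · rw [Submodule.span_le, Set.singleton_subset_iff, hx']
        exact hx
      · rw [hLrank, finrank_span_singleton hne0]
  have hcard : Nat.card (ChamberLine K f i) = Nat.card ↥(f i) :=
    (Nat.card_congr (Equiv.ofBijective φ hbij)).symm
  rw [hcard]
  haveI : Finite V := Module.finite_of_finite K
  haveI : Fintype V := Fintype.ofFinite V
  rw [Nat.card_eq_fintype_card, card_eq_pow_finrank (K := K) (V := ↥(f i)), hfi]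

end OppCount

/-- every chamber of `𝔽_q^c` is opposite to exactly `q^{C(c,2)}` chambers. -/
theorem card_opposite_chambers (q c : ℕ) (K V : Type*) [Field K] [Fintype K]
    [AddCommGroup V] [Module K V] [FiniteDimensional K V]
    (hK : Fintype.card K = q) (hV : Module.finrank K V = c)
    (f : ℕ → Submodule K V) (hf : IsChamber K c f) :
    Nat.card {g : ℕ → Submodule K V // IsChamber K c g ∧ OppositeChambers K c f g} =
      q ^ c.choose 2 := by
  rw [Nat.card_congr (oppEquiv hf hV), Nat.card_pi]
  have : ∀ i : Fin c, Nat.card (ChamberLine K f i) = q ^ (i : ℕ) := by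
    intro i
    rw [card_chamberLine hf i.2, hK]
  rw [Finset.prod_congr rfl (fun i _ => this i), Finset.prod_pow_eq_pow_sum]
  congr 1
  rw [← Finset.sum_range (fun i => i), Finset.sum_range_id, Nat.choose_two_right]
end

section
/- Given a non-empty flag F in F_q^d of type {t_1 < t_2 < ... < t_f}, the number of chambers of F_q^d containing F equals z_{t_1} · z_{d - t_f} · ∏_{i=2}^{f} z_{t_i - t_{i-1}}, where z_c denotes the number of chambers of F_q^c. -/
open Module Finset
open scoped Classical

/-!
A chamber through a subspace `W` of dimension `t` is the same as a chamber of `W` (its members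
below `W`) together with a chamber of `V ⧸ W` (the images of its members above `W`). Fibering the
chambers of `V` over their line therefore gives `z_{c+1} = [c+1]_q z_c`, where
`[n]_q = 1 + q + ⋯ + q^{n-1}` is the number of lines, and splitting a flag off at its largest
member gives the product formula by induction on the length of the flag.
-/

open scoped LinearAlgebra.Projectivization

lemma pow_sub_one_eq_geomSum_mul {q : ℕ} (hq : 1 ≤ q) (n : ℕ) :
    q ^ n - 1 = (∑ k ∈ range n, q ^ k) * (q - 1) := by
  obtain ⟨p, rfl⟩ := Nat.exists_eq_add_of_le' hq
  rw [← geom_sum_mul_add p n, Nat.add_sub_cancel, Nat.add_sub_cancel]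

lemma zNat_eq_prod_geomSum {q : ℕ} (hq : 2 ≤ q) (c : ℕ) :
    zNat q c = ∏ i ∈ Icc 1 c, ∑ k ∈ range i, q ^ k := by
  rw [zNat, prod_congr rfl fun i _ => pow_sub_one_eq_geomSum_mul (by omega) i, prod_mul_distrib,
    prod_const, Nat.card_Icc, Nat.add_sub_cancel, Nat.mul_div_cancel _ (pow_pos (by omega) c)]

lemma zNat_succ {q : ℕ} (hq : 2 ≤ q) (c : ℕ) :
    zNat q (c + 1) = (∑ k ∈ range (c + 1), q ^ k) * zNat q c := by
  rw [zNat_eq_prod_geomSum hq, zNat_eq_prod_geomSum hq, prod_Icc_succ_top (by omega), mul_comm]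

instance Submodule.finite_of_finite {K V : Type*} [Semiring K] [AddCommMonoid V] [Module K V]
    [Finite V] : Finite (Submodule K V) :=
  Finite.of_injective _ SetLike.coe_injective

section

variable {K V : Type*} [Field K] [AddCommGroup V] [Module K V]

namespace Submodule

lemma finrank_map_mkQ_add_finrank [FiniteDimensional K V] {W P : Submodule K V} (hWP : W ≤ P) :
    finrank K (P.map W.mkQ) + finrank K W = finrank K P := by
  have h := LinearMap.finrank_range_add_finrank_ker (W.mkQ.comp P.subtype)
  rwa [LinearMap.range_comp, range_subtype, LinearMap.ker_comp, ker_mkQ,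
    (comapSubtypeEquivOfLe hWP).finrank_eq] at h

lemma finrank_comap_mkQ [FiniteDimensional K V] (W : Submodule K V) (B : Submodule K (V ⧸ W)) :
    finrank K (B.comap W.mkQ) = finrank K B + finrank K W := by
  have h := finrank_map_mkQ_add_finrank (W.le_comap_mkQ B)
  rw [map_comap_eq_of_surjective W.mkQ_surjective] at h
  exact h.symm

lemma comap_subtype_inj {W P H : Submodule K V} (hP : P ≤ W) (hH : H ≤ W) :
    P.comap W.subtype = H.comap W.subtype ↔ P = H := by
  refine ⟨fun h => ?_, congrArg _⟩
  have h' := congrArg (map W.subtype) h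
  rwa [map_comap_subtype, map_comap_subtype, inf_eq_right.mpr hP, inf_eq_right.mpr hH] at h'

end Submodule

namespace IsChamber

lemma apply_zero [FiniteDimensional K V] {c : ℕ} {f : ℕ → Submodule K V}
    (hf : IsChamber K c f) : f 0 = ⊥ :=
  Submodule.finrank_eq_zero.mp (hf.2.1 0 c.zero_le)

variable {d t : ℕ} {f : ℕ → Submodule K V} {W : Submodule K V}

lemma comap_subtype (hf : IsChamber K d f) (htd : t ≤ d) (hW : f t = W) :
    IsChamber K t fun i => (f i).comap W.subtype := by
  subst hW
  refine ⟨fun i j hij => Submodule.comap_mono (hf.1 hij), fun i hi => ?_,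
    fun i hi => Submodule.comap_subtype_eq_top.mpr (hf.1 hi)⟩
  rw [(Submodule.comapSubtypeEquivOfLe (hf.1 hi)).finrank_eq, hf.2.1 i (hi.trans htd)]

lemma map_mkQ [FiniteDimensional K V] (hf : IsChamber K d f) (htd : t ≤ d) (hW : f t = W) :
    IsChamber K (d - t) fun i => (f (t + i)).map W.mkQ := by
  subst hW
  refine ⟨fun i j hij => Submodule.map_mono (hf.1 (by omega)), fun i hi => ?_, fun i hi => ?_⟩
  · beta_reduce
    have h := Submodule.finrank_map_mkQ_add_finrank (hf.1 (Nat.le_add_right t i))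
    rw [hf.2.1 t htd, hf.2.1 (t + i) (by omega)] at h
    omega
  · beta_reduce
    rw [hf.2.2 (t + i) (by omega), Submodule.map_top, Submodule.range_mkQ]

end IsChamber

instance Chamber.finite [Finite V] (c : ℕ) : Finite (Chamber K V c) := by
  refine Finite.of_injective (fun C (i : Fin (c + 1)) => C.1 i) fun C D h => ?_
  refine Subtype.ext (funext fun i => ?_)
  rcases le_or_gt i c with hi | hi
  · exact congrFun h ⟨i, by omega⟩
  · rw [C.2.2.2 i hi.le, D.2.2.2 i hi.le]

lemma Chamber.nat_card_eq_one [FiniteDimensional K V] {c : ℕ} (hV : finrank K V = c)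
    (hc : c ≤ 1) : Nat.card (Chamber K V c) = 1 := by
  have hsub : Subsingleton (Chamber K V c) := by
    refine ⟨fun C D => Subtype.ext (funext fun i => ?_)⟩
    rcases Nat.eq_zero_or_pos i with rfl | hi
    · rw [C.2.apply_zero, D.2.apply_zero]
    · rw [C.2.2.2 i (by omega), D.2.2.2 i (by omega)]
  refine Nat.card_eq_one_iff_unique.mpr ⟨hsub,
    ⟨fun i => if i < c then ⊥ else ⊤, fun a b hab => ?_, fun i hi => ?_, fun i hi => ?_⟩⟩
  · dsimp only
    split_ifs <;> first | exact bot_le | exact le_top | omega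
  · show finrank K ↥(if i < c then (⊥ : Submodule K V) else ⊤) = i
    by_cases h : i < c
    · rw [if_pos h, finrank_bot]; omega
    · rw [if_neg h, finrank_top]; omega
  · exact if_neg (not_lt.mpr hi)

def glueChains (W : Submodule K V) (t : ℕ) (A : ℕ → Submodule K W)
    (B : ℕ → Submodule K (V ⧸ W)) (i : ℕ) : Submodule K V :=
  if i < t then (A i).map W.subtype else (B (i - t)).comap W.mkQ

section glueChains

variable {W : Submodule K V} {t : ℕ} {A : ℕ → Submodule K W}
  {B : ℕ → Submodule K (V ⧸ W)}

lemma glueChains_of_lt {i : ℕ} (hi : i < t) : glueChains W t A B i = (A i).map W.subtype :=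
  if_pos hi

lemma glueChains_of_le {i : ℕ} (hi : t ≤ i) :
    glueChains W t A B i = (B (i - t)).comap W.mkQ :=
  if_neg (not_lt.mpr hi)

lemma IsChamber.glueChains [FiniteDimensional K V] {d : ℕ} (hV : finrank K V = d)
    (hW : finrank K W = t) (hA : IsChamber K t A) (hB : IsChamber K (d - t) B) :
    IsChamber K d (glueChains W t A B) := by
  have htd : t ≤ d := hV ▸ hW ▸ W.finrank_le
  refine ⟨fun i j hij => ?_, fun i hi => ?_, fun i hi => ?_⟩
  · rcases lt_or_ge i t with hi | hi <;> rcases lt_or_ge j t with hj | hj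
    · rw [glueChains_of_lt hi, glueChains_of_lt hj]
      exact Submodule.map_mono (hA.1 hij)
    · rw [glueChains_of_lt hi, glueChains_of_le hj]
      exact (W.map_subtype_le _).trans (W.le_comap_mkQ _)
    · omega
    · rw [glueChains_of_le hi, glueChains_of_le hj]
      exact Submodule.comap_mono (hB.1 (by omega))
  · rcases lt_or_ge i t with hit | hit
    · rw [glueChains_of_lt hit, Submodule.finrank_map_subtype_eq, hA.2.1 i hit.le]
    · rw [glueChains_of_le hit, Submodule.finrank_comap_mkQ, hB.2.1 (i - t) (by omega), hW]
      omega
  · rw [glueChains_of_le (htd.trans hi), hB.2.2 (i - t) (by omega), Submodule.comap_top]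

lemma glueChains_self [FiniteDimensional K V] {c : ℕ} (hB : IsChamber K c B) :
    glueChains W t A B t = W := by
  rw [glueChains_of_le le_rfl, Nat.sub_self, hB.apply_zero, Submodule.comap_bot,
    Submodule.ker_mkQ]

lemma glueChains_comap_subtype_map_mkQ {f : ℕ → Submodule K V} (hf : Monotone f)
    (hW : f t = W) :
    glueChains W t (fun i => (f i).comap W.subtype) (fun i => (f (t + i)).map W.mkQ) = f := by
  subst hW
  funext i
  rcases lt_or_ge i t with hi | hi
  · rw [glueChains_of_lt hi, Submodule.map_comap_subtype, inf_eq_right.mpr (hf hi.le)]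
  · rw [glueChains_of_le hi, Nat.add_sub_cancel' hi, Submodule.comap_map_mkQ,
      sup_eq_right.mpr (hf hi)]

lemma comap_subtype_glueChains (hA : ∀ i, t ≤ i → A i = ⊤) :
    (fun i => (glueChains W t A B i).comap W.subtype) = A := by
  funext i
  rcases lt_or_ge i t with hi | hi
  · rw [glueChains_of_lt hi, Submodule.comap_map_eq_of_injective W.injective_subtype]
  · rw [glueChains_of_le hi, hA i hi, Submodule.comap_subtype_eq_top]
    exact W.le_comap_mkQ _

lemma map_mkQ_glueChains : (fun i => (glueChains W t A B (t + i)).map W.mkQ) = B := by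
  funext i
  rw [glueChains_of_le (Nat.le_add_right t i), Nat.add_sub_cancel_left,
    Submodule.map_comap_eq_of_surjective W.mkQ_surjective]

end glueChains

variable [FiniteDimensional K V] {d : ℕ}

def chambersThroughEquiv {t : ℕ} {W : Submodule K V} (hV : finrank K V = d)
    (hW : finrank K W = t) :
    {C : Chamber K V d // C.1 t = W} ≃ Chamber K W t × Chamber K (V ⧸ W) (d - t) where
  toFun C := (⟨_, C.1.2.comap_subtype (hV ▸ hW ▸ W.finrank_le) C.2⟩,
    ⟨_, C.1.2.map_mkQ (hV ▸ hW ▸ W.finrank_le) C.2⟩)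
  invFun AB := ⟨⟨_, AB.1.2.glueChains hV hW AB.2.2⟩, glueChains_self AB.2.2⟩
  left_inv C := Subtype.ext (Subtype.ext (glueChains_comap_subtype_map_mkQ C.1.2.1 C.2))
  right_inv AB :=
    Prod.ext (Subtype.ext (comap_subtype_glueChains AB.1.2.2.2)) (Subtype.ext map_mkQ_glueChains)

def chambersThroughFlagEquiv {m : ℕ} (hV : finrank K V = d) {t : Fin (m + 2) → ℕ}
    {g : Fin (m + 2) → Submodule K V} (hgmono : Monotone g) (hg : ∀ j, finrank K (g j) = t j) :
    {C : Chamber K V d // ∀ j, C.1 (t j) = g j} ≃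
      {A : Chamber K (g (Fin.last _)) (t (Fin.last _)) // ∀ j : Fin (m + 1),
          A.1 (t j.castSucc) = (g j.castSucc).comap (g (Fin.last _)).subtype} ×
        Chamber K (V ⧸ g (Fin.last _)) (d - t (Fin.last _)) :=
  have hle (j : Fin (m + 1)) : g j.castSucc ≤ g (Fin.last _) := hgmono (Fin.le_last _)
  have ht (j : Fin (m + 1)) : t j.castSucc ≤ t (Fin.last _) :=
    hg j.castSucc ▸ hg (Fin.last _) ▸ Submodule.finrank_mono (hle j)
  ((Equiv.subtypeEquivRight fun _ => Fin.forall_fin_succ'.trans and_comm).trans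
      (Equiv.subtypeSubtypeEquivSubtypeInter _ _).symm).trans <|
    (Equiv.subtypeEquiv (chambersThroughEquiv hV (hg _)) fun C => forall_congr' fun j =>
      (Submodule.comap_subtype_inj ((C.1.2.1 (ht j)).trans_eq C.2) (hle j)).symm).trans
    Equiv.prodSubtypeFstEquivSubtypeProd

end

noncomputable def Chamber.equivSigmaLine {K V : Type*} [Field K] [AddCommGroup V] [Module K V]
    {c : ℕ} (hc : 1 ≤ c) :
    Chamber K V c ≃ Σ p : ℙ K V, {C : Chamber K V c // C.1 1 = p.submodule} :=
  (Equiv.sigmaFiberEquiv fun C => Projectivization.mk'' (C.1 1) (C.2.2.1 1 hc)).symm.trans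
    (Equiv.sigmaCongrRight fun p => Equiv.subtypeEquivRight fun C =>
      ⟨fun h => h ▸ (Projectivization.submodule_mk'' _ _).symm,
        fun h => Projectivization.submodule_injective <| by
          rw [Projectivization.submodule_mk'', h]⟩)

theorem card_chamber {K V : Type*} [Field K] [Finite K] [AddCommGroup V] [Module K V]
    [FiniteDimensional K V] {c : ℕ} (hV : finrank K V = c) :
    Nat.card (Chamber K V c) = zNat (Nat.card K) c := by
  induction c generalizing V with
  | zero => simp [Chamber.nat_card_eq_one hV zero_le_one, zNat]
  | succ c ih =>
    have : Finite V := Module.finite_of_finite K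
    have : Finite (ℙ K V) := (Projectivization.finite_iff_of_finite K V).mpr ‹_›
    have := Fintype.ofFinite (ℙ K V)
    have hfiber (p : ℙ K V) :
        Nat.card {C : Chamber K V (c + 1) // C.1 1 = p.submodule} = zNat (Nat.card K) c := by
      rw [Nat.card_congr (chambersThroughEquiv hV p.finrank_submodule), Nat.card_prod,
        Chamber.nat_card_eq_one p.finrank_submodule le_rfl, one_mul]
      exact ih (by rw [Submodule.finrank_quotient, hV, p.finrank_submodule, Nat.add_sub_cancel])
    rw [Nat.card_congr (Chamber.equivSigmaLine le_add_self), Nat.card_sigma,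
      sum_congr rfl fun p _ => hfiber p, sum_const, card_univ, smul_eq_mul,
      Fintype.card_eq_nat_card, Projectivization.card_of_finrank K V hV,
      zNat_succ Finite.one_lt_card]

theorem card_chambers_through_flag_general (q d m : ℕ) (K V : Type*) [Field K] [Fintype K]
    [AddCommGroup V] [Module K V] [FiniteDimensional K V]
    (hK : Fintype.card K = q) (hV : Module.finrank K V = d)
    (t : Fin (m + 1) → ℕ)
    (g : Fin (m + 1) → Submodule K V) (hgmono : Monotone g)
    (hg : ∀ j, Module.finrank K (g j) = t j) :
    Nat.card {C : Chamber K V d // ∀ j, C.1 (t j) = g j} =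
      zNat q (t 0) * zNat q (d - t (Fin.last m)) *
        ∏ j : Fin m, zNat q (t j.succ - t j.castSucc) := by
  rw [← hK, Fintype.card_eq_nat_card]
  induction m generalizing d V with
  | zero =>
    rw [Nat.card_congr ((Equiv.subtypeEquivRight fun _ => Fin.forall_fin_one).trans
        (chambersThroughEquiv hV (hg 0))), Nat.card_prod, card_chamber (hg 0),
      card_chamber (by rw [Submodule.finrank_quotient, hV, hg 0])]
    simp
  | succ m ih =>
    have hle (j : Fin (m + 1)) : g j.castSucc ≤ g (Fin.last _) := hgmono (Fin.le_last _)
    rw [Nat.card_congr (chambersThroughFlagEquiv hV hgmono hg), Nat.card_prod,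
      ih (hV := hg _) (t := fun j => t j.castSucc)
        (g := fun j => (g j.castSucc).comap (g (Fin.last _)).subtype)
        (hgmono := fun _ _ hij =>
          Submodule.comap_mono (hgmono (Fin.castSucc_le_castSucc_iff.2 hij)))
        (hg := fun j => (Submodule.comapSubtypeEquivOfLe (hle j)).finrank_eq.trans (hg _)),
      card_chamber (by rw [Submodule.finrank_quotient, hV, hg]), Fin.prod_univ_castSucc]
    simp only [Fin.castSucc_zero, Fin.succ_last, Fin.succ_castSucc]
    ring

/-- the number of chambers containing a non-empty flag of type
`t_1 < … < t_f` is `z_{t_1} · z_{d-t_f} · ∏_{i=2}^f z_{t_i - t_{i-1}}`. -/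
theorem card_chambers_through_flag (q d m : ℕ) (K V : Type*) [Field K] [Fintype K]
    [AddCommGroup V] [Module K V] [FiniteDimensional K V]
    (hK : Fintype.card K = q) (hV : Module.finrank K V = d)
    (t : Fin (m + 1) → ℕ) (ht : StrictMono t)
    (ht1 : 1 ≤ t 0) (htd : t (Fin.last m) ≤ d - 1)
    (g : Fin (m + 1) → Submodule K V) (hgmono : Monotone g)
    (hg : ∀ j, Module.finrank K (g j) = t j) :
    Nat.card {C : Chamber K V d // ∀ j, C.1 (t j) = g j} =
      zNat q (t 0) * zNat q (d - t (Fin.last m)) *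
        ∏ j : Fin m, zNat q (t j.succ - t j.castSucc) :=
  card_chambers_through_flag_general q d m K V hK hV t g hgmono hg
end
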